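/- Let A be an anti-commutative CB-algebra over a field F of characteristic different from 2. Then A is metabelian, i.e., A^{(2)} = 0; in particular (x·y)·(z·w) = 0 for all x, y, z, w ∈ A. -/

import Mathlib

/-!
Write `xy` for `mul x y`. Anti-commutativity makes the CB-condition applicable to every pair
`(x, x)`, so `(xz)x = 0`; linearizing in `x` gives the cyclic law `(uv)w = (vw)u`. Applying the
CB-condition to `(xy)x = 0` and rotating gives `(zx)(xy) = 0`, whose linearization
`(zx)(wy) = -(zw)(xy)` lets one move the entries of `(xy)(zw)` around until it equals its own
negative. Since `2 ≠ 0`, `(xy)(zw) = 0`, and `A⁽²⁾` is spanned by such products.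
-/

/-- The derived series: `derSeries mul 0 = A` and
`derSeries mul (k+1) = span {u·v | u, v ∈ derSeries mul k}`. -/
def derSeries {F A : Type*} [Field F] [AddCommGroup A] [Module F A]
    (mul : A →ₗ[F] A →ₗ[F] A) : ℕ → Submodule F A
  | 0 => ⊤
  | k + 1 => Submodule.span F
      {w : A | ∃ u ∈ derSeries mul k, ∃ v ∈ derSeries mul k, w = mul u v}

namespace LinearMap

variable {R M : Type*} [CommSemiring R] [AddCommGroup M] [Module R M]

def IsCB (mul : M →ₗ[R] M →ₗ[R] M) : Prop :=
  ∀ x y, mul x y = 0 → ∀ z, mul (mul x z) y = 0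

variable {mul : M →ₗ[R] M →ₗ[R] M}

namespace IsCB

theorem mul_mul_self_eq_zero (hcb : mul.IsCB) (hac : mul.IsAlt) (x z : M) :
    mul (mul x z) x = 0 :=
  hcb x x (hac x) z

theorem mul_mul_cyclic (hcb : mul.IsCB) (hac : mul.IsAlt) (u v w : M) :
    mul (mul u v) w = mul (mul v w) u := by
  have h := hcb.mul_mul_self_eq_zero hac (u + w) v
  simp only [map_add, add_apply, hcb.mul_mul_self_eq_zero hac u v,
    hcb.mul_mul_self_eq_zero hac w v] at h
  rw [← hac.neg v w, map_neg, neg_apply] at h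
  linear_combination (norm := abel) h

theorem mul_mul_mul_shared_eq_zero (hcb : mul.IsCB) (hac : mul.IsAlt) (x y z : M) :
    mul (mul z x) (mul x y) = 0 := by
  have h := hcb (mul x y) x (hcb.mul_mul_self_eq_zero hac x y) z
  rwa [hcb.mul_mul_cyclic hac (mul x y) z x] at h

theorem mul_mul_mul_add_mul_mul_mul_eq_zero (hcb : mul.IsCB) (hac : mul.IsAlt)
    (x y z w : M) : mul (mul z x) (mul w y) + mul (mul z w) (mul x y) = 0 := by
  have h := hcb.mul_mul_mul_shared_eq_zero hac (x + w) y z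
  simp only [map_add, add_apply, hcb.mul_mul_mul_shared_eq_zero hac x y z,
    hcb.mul_mul_mul_shared_eq_zero hac w y z] at h
  linear_combination (norm := abel) h

theorem two_smul_mul_mul_mul_eq_zero (hcb : mul.IsCB) (hac : mul.IsAlt) (x y z w : M) :
    (2 : R) • mul (mul x y) (mul z w) = 0 := by
  have e₁ := hcb.mul_mul_mul_add_mul_mul_mul_eq_zero hac y w x z
  have e₂ := hcb.mul_mul_mul_add_mul_mul_mul_eq_zero hac w z y x
  have e₃ := hac.neg (mul x z) (mul y w)
  have e₄ : mul (mul y x) (mul w z) = mul (mul x y) (mul z w) := by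
    rw [← hac.neg x y, ← hac.neg z w, map_neg, map_neg, neg_apply, neg_neg]
  rw [two_smul]
  linear_combination (norm := abel) e₁ + e₃ + e₂ - e₄

end IsCB

end LinearMap

section DerivedSeries

variable {F A : Type*} [Field F] [AddCommGroup A] [Module F A] (mul : A →ₗ[F] A →ₗ[F] A)

theorem derSeries_succ (k : ℕ) :
    derSeries mul (k + 1) = Submodule.map₂ mul (derSeries mul k) (derSeries mul k) := by
  rw [Submodule.map₂_eq_span_image2, derSeries]
  congr 1
  ext w
  simp [Set.image2, eq_comm]

theorem derSeries_two_eq_bot_iff :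
    derSeries mul 2 = ⊥ ↔ ∀ x y z w : A, mul (mul x y) (mul z w) = 0 := by
  rw [derSeries_succ, derSeries_succ, derSeries, ← Submodule.span_univ,
    Submodule.map₂_span_span, Submodule.map₂_span_span, Submodule.span_eq_bot]
  simp only [Set.forall_mem_image2, Set.mem_univ, forall_const]

end DerivedSeries

/-- An anti-commutative CB-algebra over a field of characteristic different
from 2 is metabelian: `A⁽²⁾ = 0`; in particular `(x·y)·(z·w) = 0` for all
`x, y, z, w`. -/
theorem stmt_10 (F : Type*) [Field F] (h2 : (2 : F) ≠ 0)
    (A : Type*) [AddCommGroup A] [Module F A]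
    (mul : A →ₗ[F] A →ₗ[F] A)
    (hac : ∀ x : A, mul x x = 0)
    (hcb : ∀ x y : A, mul x y = 0 → ∀ z : A, mul (mul x z) y = 0) :
    derSeries mul 2 = ⊥ ∧ (∀ x y z w : A, mul (mul x y) (mul z w) = 0) := by
  have key : ∀ x y z w : A, mul (mul x y) (mul z w) = 0 := fun x y z w =>
    (smul_eq_zero.mp <|
      LinearMap.IsCB.two_smul_mul_mul_mul_eq_zero hcb hac x y z w).resolve_left h2
  exact ⟨(derSeries_two_eq_bot_iff mul).mpr key, key⟩
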